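/- Identification of the generalized local average controlled spillover effect with own treatment fixed at 1 (Theorem 3.1, item 1, d = 1): let 0 ≤ p₀ ≤ 1 and 0 ≤ p₁ < p₁' ≤ 1 with ℙ(V₀ ≤ p₀ and p₁ < V₁ ≤ p₁') > 0. Then C(p₀,p₁') − C(p₀,p₁) = ℙ(V₀ ≤ p₀ and p₁ < V₁ ≤ p₁'), and (F¹(p₀,p₁') − F¹(p₀,p₁)) / (C(p₀,p₁') − C(p₀,p₁)) = 𝔼[ m(1,1,U) − m(1,0,U) | V₀ ≤ p₀ and p₁ < V₁ ≤ p₁' ], the local average controlled spillover effect LACSE^{(1)} for the subpopulation {V₀ ≤ p₀, p₁ < V₁ ≤ p₁'}. -/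
import Mathlib


open MeasureTheory ProbabilityTheory

/-- Identification of the generalized local average controlled spillover effect with own
treatment fixed at 1 (Theorem 3.1, item 1, d = 1). -/
theorem lacse_one_identification
    {Ω 𝒰 : Type*} [MeasurableSpace Ω] [MeasurableSpace 𝒰]
    (μ : Measure Ω) [IsProbabilityMeasure μ]
    (U : Ω → 𝒰) (V₀ V₁ : Ω → ℝ)
    (hU : Measurable U) (hV₀ : Measurable V₀) (hV₁ : Measurable V₁)
    -- V₀, V₁ uniformly distributed on (0,1)
    (hV₀unif : Measure.map V₀ μ = volume.restrict (Set.Ioo (0:ℝ) 1))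
    (hV₁unif : Measure.map V₁ μ = volume.restrict (Set.Ioo (0:ℝ) 1))
    -- bounded measurable outcome function (`true` codes treatment 1, `false` codes 0)
    (m : Bool → Bool → 𝒰 → ℝ) (hm : ∀ d d', Measurable (m d d'))
    (hm_bdd : ∃ B, ∀ d d' u, |m d d' u| ≤ B)
    -- the copula of (V₀, V₁)
    (C : ℝ → ℝ → ℝ)
    (hC : ∀ p q, C p q = (μ {ω | V₀ ω ≤ p ∧ V₁ ω ≤ q}).toReal)
    -- identified conditional-mean function F¹
    (F1 : ℝ → ℝ → ℝ)
    (hF1 : ∀ p q, F1 p q =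
      (∫ ω, m true true (U ω) * (if V₀ ω ≤ p then (1:ℝ) else 0)
        * (if V₁ ω ≤ q then (1:ℝ) else 0) ∂μ)
      + ∫ ω, m true false (U ω) * (if V₀ ω ≤ p then (1:ℝ) else 0)
        * (if q < V₁ ω then (1:ℝ) else 0) ∂μ)
    -- the propensity-score values
    (p₀ p₁ p₁' : ℝ) (hp₀0 : 0 ≤ p₀) (hp₀1 : p₀ ≤ 1)
    (hp₁0 : 0 ≤ p₁) (hp₁lt : p₁ < p₁') (hp₁'1 : p₁' ≤ 1)
    -- the conditioning subpopulation {V₀ ≤ p₀, p₁ < V₁ ≤ p₁'} has positive probability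
    (E : Set Ω) (hE : E = {ω | V₀ ω ≤ p₀ ∧ p₁ < V₁ ω ∧ V₁ ω ≤ p₁'})
    (hEpos : 0 < μ E) :
    C p₀ p₁' - C p₀ p₁ = (μ E).toReal ∧
    (F1 p₀ p₁' - F1 p₀ p₁) / (C p₀ p₁' - C p₀ p₁)
      = (∫ ω in E, (m true true (U ω) - m true false (U ω)) ∂μ) / (μ E).toReal := by
  obtain ⟨B, hB⟩ := hm_bdd
  -- measurability of the indicator sets
  have hE_meas : MeasurableSet E := by
    rw [hE]
    exact (measurableSet_le hV₀ measurable_const).inter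
      ((measurableSet_lt measurable_const hV₁).inter (measurableSet_le hV₁ measurable_const))
  -- Part 1
  have hunion : {ω | V₀ ω ≤ p₀ ∧ V₁ ω ≤ p₁'} = {ω | V₀ ω ≤ p₀ ∧ V₁ ω ≤ p₁} ∪ E := by
    rw [hE]; ext ω
    simp only [Set.mem_setOf_eq, Set.mem_union]
    constructor
    · rintro ⟨h0, h1⟩
      by_cases h : V₁ ω ≤ p₁
      · exact Or.inl ⟨h0, h⟩
      · exact Or.inr ⟨h0, lt_of_not_ge h, h1⟩
    · rintro (⟨h0, h1⟩ | ⟨h0, h1, h2⟩)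
      exacts [⟨h0, h1.trans hp₁lt.le⟩, ⟨h0, h2⟩]
  have hdisj : Disjoint {ω | V₀ ω ≤ p₀ ∧ V₁ ω ≤ p₁} E := by
    rw [hE]
    exact Set.disjoint_left.mpr fun ω ⟨_, h1⟩ ⟨_, h2, _⟩ => absurd h1 (not_le.mpr h2)
  have hmeasadd : μ {ω | V₀ ω ≤ p₀ ∧ V₁ ω ≤ p₁'}
      = μ {ω | V₀ ω ≤ p₀ ∧ V₁ ω ≤ p₁} + μ E := by
    rw [hunion, measure_union hdisj hE_meas]
  have part1 : C p₀ p₁' - C p₀ p₁ = (μ E).toReal := by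
    rw [hC, hC, hmeasadd, ENNReal.toReal_add (measure_ne_top μ _) (measure_ne_top μ _)]
    ring
  refine ⟨part1, ?_⟩
  -- integrability helper
  have hint : ∀ (d d' : Bool) (g h : Ω → ℝ), Measurable g → Measurable h →
      (∀ ω, |g ω| ≤ 1) → (∀ ω, |h ω| ≤ 1) →
      Integrable (fun ω => m d d' (U ω) * g ω * h ω) μ := by
    intro d d' g h hg hh hg1 hh1
    refine Integrable.mono' (integrable_const B)
      ((((hm d d').comp hU).mul hg).mul hh).aestronglyMeasurable
      (Filter.Eventually.of_forall fun ω => ?_)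
    calc |m d d' (U ω) * g ω * h ω| = |m d d' (U ω)| * |g ω| * |h ω| := by
          rw [abs_mul, abs_mul]
      _ ≤ B * 1 * 1 := by
          have := hB d d' (U ω)
          have h0 : (0:ℝ) ≤ B := le_trans (abs_nonneg _) this
          gcongr <;> [exact hg1 ω; exact hh1 ω]
      _ = B := by ring
  have hite : ∀ (c : Ω → Prop) [DecidablePred c], Measurable c → ∀ ω, |(if c ω then (1:ℝ) else 0)| ≤ 1 := by
    intro c _ _ ω; split_ifs <;> simp
  have hm0 : Measurable fun ω => if V₀ ω ≤ p₀ then (1:ℝ) else 0 :=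
    Measurable.ite (measurableSet_le hV₀ measurable_const) measurable_const measurable_const
  have hmq : ∀ q : ℝ, Measurable fun ω => if V₁ ω ≤ q then (1:ℝ) else 0 :=
    fun q => Measurable.ite (measurableSet_le hV₁ measurable_const) measurable_const measurable_const
  have hmq' : ∀ q : ℝ, Measurable fun ω => if q < V₁ ω then (1:ℝ) else 0 :=
    fun q => Measurable.ite (measurableSet_lt measurable_const hV₁) measurable_const measurable_const
  have habs : ∀ (f : Ω → ℝ), (∀ ω, f ω = 0 ∨ f ω = 1) → ∀ ω, |f ω| ≤ 1 := by
    intro f hf ω; rcases hf ω with h | h <;> rw [h] <;> norm_num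
  have hone : ∀ (P : Prop) [Decidable P], (if P then (1:ℝ) else 0) = 0 ∨ (if P then (1:ℝ) else 0) = 1 := by
    intro P _; split_ifs <;> simp
  have I1' := hint true true _ _ hm0 (hmq p₁') (habs _ fun ω => hone _) (habs _ fun ω => hone _)
  have I1 := hint true true _ _ hm0 (hmq p₁) (habs _ fun ω => hone _) (habs _ fun ω => hone _)
  have I2' := hint true false _ _ hm0 (hmq' p₁') (habs _ fun ω => hone _) (habs _ fun ω => hone _)
  have I2 := hint true false _ _ hm0 (hmq' p₁) (habs _ fun ω => hone _) (habs _ fun ω => hone _)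
  -- the key integral identity
  have key : F1 p₀ p₁' - F1 p₀ p₁ = ∫ ω in E, (m true true (U ω) - m true false (U ω)) ∂μ := by
    rw [hF1, hF1, ← integral_indicator hE_meas, ← integral_add I1' I2',
      ← integral_add I1 I2]
    have J' : Integrable (fun a =>
        (m true true (U a) * if V₀ a ≤ p₀ then (1:ℝ) else 0) * (if V₁ a ≤ p₁' then (1:ℝ) else 0)
        + (m true false (U a) * if V₀ a ≤ p₀ then (1:ℝ) else 0)
          * (if p₁' < V₁ a then (1:ℝ) else 0)) μ := I1'.add I2'
    have J : Integrable (fun a =>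
        (m true true (U a) * if V₀ a ≤ p₀ then (1:ℝ) else 0) * (if V₁ a ≤ p₁ then (1:ℝ) else 0)
        + (m true false (U a) * if V₀ a ≤ p₀ then (1:ℝ) else 0)
          * (if p₁ < V₁ a then (1:ℝ) else 0)) μ := I1.add I2
    rw [← integral_sub J' J]
    refine integral_congr_ae (Filter.Eventually.of_forall fun ω => ?_)
    simp only [hE, Set.indicator_apply, Set.mem_setOf_eq, ← not_le]
    by_cases h0 : V₀ ω ≤ p₀ <;> by_cases h1 : V₁ ω ≤ p₁ <;> by_cases h2 : V₁ ω ≤ p₁' <;>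
      simp only [h0, h1, h2, not_true, not_false_iff, true_and, false_and, and_true,
        and_false, if_true, if_false, ite_true, ite_false, not_false_eq_true,
        not_true_eq_false] <;>
      first
        | (exfalso; exact h2 (h1.trans hp₁lt.le))
        | ring1
        | simp
  rw [key, part1]
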